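/- For any involution y in S_n and any permutation w with w^{-1} ∘ w = y under the Demazure product, ℓ(w) ≥ ℓ̂(y), where ℓ̂(y) = (ℓ(y) + n − |Cyc(y)|)/2; that is, atoms of y are exactly the minimal-length such w. -/

import Mathlib

/-!
The Coxeter length is the number of inversions, and a Demazure step `w ∘ s_a` multiplies by `s_a`
exactly at an ascent `w a < w (a+1)`. Appending a letter `a` to a word `l` turns the Demazure
product `z` of `l.reverse ++ l` into `s_a ∘ z ∘ s_a`, which is `z`, `z s_a` (one inversion more,
one cycle fewer) or `s_a z s_a` (two inversions more, as many cycles); so `ℓ(z) + n - |Cyc(z)|`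
grows by at most two per letter, which gives the bound.

Equality is reached by induction on `ℓ(y)`: for the largest `a` with `a < y a`, either `y` swaps
`a` and `a+1`, and `y = z s_a` with `z` fixing both, or `y = s_a z s_a` with
`z a ≤ a < a+1 < z (a+1)`. The atom built this way orders the points by the maxima of their
cycles, which makes each appended letter an ascent, so the word stays reduced.
-/

open scoped Classical

noncomputable section

/-- The simple transposition `s_i` in `S_n` (0-indexed: swaps `i` and `i+1`). -/
def simpleT (n i : ℕ) : Equiv.Perm (Fin n) :=
  if h : i + 1 < n then Equiv.swap ⟨i, Nat.lt_of_succ_lt h⟩ ⟨i + 1, h⟩ else 1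

/-- The product of the word `l` of simple transpositions. -/
def wordProd (n : ℕ) (l : List ℕ) : Equiv.Perm (Fin n) :=
  (l.map (simpleT n)).prod

/-- The Coxeter length of a permutation: minimal length of a word of simple
transpositions with product `w`. -/
def len (n : ℕ) (w : Equiv.Perm (Fin n)) : ℕ :=
  sInf {p | ∃ l : List ℕ, l.length = p ∧ wordProd n l = w}

/-- One step of the (right) Demazure / 0-Hecke product: `w ∘ s_i`. -/
def demStepR (n : ℕ) (w : Equiv.Perm (Fin n)) (i : ℕ) : Equiv.Perm (Fin n) :=
  if len n w < len n (w * simpleT n i) then w * simpleT n i else w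

/-- One step of the (left) Demazure / 0-Hecke product: `s_i ∘ w`. -/
def demStepL (n i : ℕ) (w : Equiv.Perm (Fin n)) : Equiv.Perm (Fin n) :=
  if len n w < len n (simpleT n i * w) then simpleT n i * w else w

/-- The Demazure product of the word `l`: `s_{a_1} ∘ s_{a_2} ∘ ⋯ ∘ s_{a_p}`. -/
def demWord (n : ℕ) (l : List ℕ) : Equiv.Perm (Fin n) :=
  l.foldl (demStepR n) 1

/-- `w⁻¹ ∘ w = y` for the Demazure product: expressed via a reduced word `l` of `w`,
as `demWord (l.reverse ++ l) = y` (note `l.reverse` is a reduced word of `w⁻¹`). -/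
def DemSelf (n : ℕ) (w y : Equiv.Perm (Fin n)) : Prop :=
  ∃ l : List ℕ, wordProd n l = w ∧ l.length = len n w ∧ demWord n (l.reverse ++ l) = y

/-- `w` is an atom of the involution `y`: a minimal-length permutation with
`w⁻¹ ∘ w = y` under the Demazure product. -/
def IsAtomOf (n : ℕ) (y w : Equiv.Perm (Fin n)) : Prop :=
  DemSelf n w y ∧ ∀ w', DemSelf n w' y → len n w ≤ len n w'

/-- The number of cycles (2-cycles together with fixed points) of an involution `y`. -/
def cycCount (n : ℕ) (y : Equiv.Perm (Fin n)) : ℕ :=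
  (Finset.univ.filter fun i : Fin n => i ≤ y i).card

/-- The minimal length of an involution word for `y`
(`y = s_{a_1} ⊳ ⋯ ⊳ s_{a_p}`, equivalently `y = demWord (a.reverse ++ a)`). -/
def ihat (n : ℕ) (y : Equiv.Perm (Fin n)) : ℕ :=
  sInf {p | ∃ a : List ℕ, a.length = p ∧ demWord n (a.reverse ++ a) = y}

/-- Bruhat order on `S_n` via the subword property. -/
def BruhatLE (n : ℕ) (u v : Equiv.Perm (Fin n)) : Prop :=
  ∀ l : List ℕ, wordProd n l = v → l.length = len n v →
    ∃ l' : List ℕ, l'.Sublist l ∧ wordProd n l' = u ∧ l'.length = len n u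

/-- `y` standardizes (as a word `b` on a finite alphabet of naturals) to the
permutation `y` of positions: `y i` is the rank of the letter `b i`. -/
def stdEq {k : ℕ} (b : Fin k → ℕ) (y : Equiv.Perm (Fin k)) : Prop :=
  Function.Injective b ∧
    ∀ i, (y i : ℕ) = (Finset.univ.filter fun j => b j < b i).card

/-- `q` is an inverse block atom of the block involution `b`: a word on the same
alphabet whose standardization is an inverse atom of `std b`. -/
def IsInvBlockAtomOf {k : ℕ} (b q : Fin k → ℕ) : Prop :=
  Set.range q = Set.range b ∧
    ∃ y w : Equiv.Perm (Fin k), stdEq b y ∧ y * y = 1 ∧ stdEq q w ∧ IsAtomOf k y w⁻¹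

/-- Positions `p` and `q` (0-indexed) lie in the same block of the composition `μ`. -/
def SameBlock (μ : List ℕ) (p q : ℕ) : Prop :=
  ∀ k ≤ μ.length, ((μ.take k).sum ≤ p ↔ (μ.take k).sum ≤ q)

/-- The starting position (0-indexed) of the block of `μ` containing position `p`. -/
def blockStart (μ : List ℕ) (p : ℕ) : ℕ :=
  (Finset.range (μ.length + 1)).sup fun k =>
    if (μ.take k).sum ≤ p then (μ.take k).sum else 0

/-- The 0-Hecke action `π ∘_μ s_i` on `μ`-involutions: if the values `i, i+1` of `π`
lie in different blocks it is `s_i ∘ π`; if they lie in the same block `B` it is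
`s_i ∘ π ∘ s_r`, where `r` is the position (global, 0-indexed) within the block
corresponding to the relative value of `i` in `B`. -/
def muAct (n : ℕ) (μ : List ℕ) (π : Equiv.Perm (Fin n)) (i : ℕ) : Equiv.Perm (Fin n) :=
  if h : i + 1 < n then
    let a : Fin n := ⟨i, Nat.lt_of_succ_lt h⟩
    let b : Fin n := ⟨i + 1, h⟩
    if SameBlock μ ((π⁻¹ a : Fin n) : ℕ) ((π⁻¹ b : Fin n) : ℕ) then
      demStepR n (demStepL n i π)
        (blockStart μ ((π⁻¹ a : Fin n) : ℕ) +
          (Finset.univ.filter fun p' : Fin n =>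
            SameBlock μ (p' : ℕ) ((π⁻¹ a : Fin n) : ℕ) ∧ (π p' : ℕ) < i).card)
    else demStepL n i π
  else π

/-- `e ∘_μ s_{a_1} ∘_μ ⋯ ∘_μ s_{a_p}` for a word `l = (a_1, …, a_p)`. -/
def muWord (n : ℕ) (μ : List ℕ) (l : List ℕ) : Equiv.Perm (Fin n) :=
  l.foldl (muAct n μ) 1

/-- `ℓ_μ(π)`: the minimal length of a `μ`-word for `π`. -/
def lmu (n : ℕ) (μ : List ℕ) (π : Equiv.Perm (Fin n)) : ℕ :=
  sInf {p | ∃ l : List ℕ, l.length = p ∧ muWord n μ l = π}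

/-- The `i`-th block of the one-line notation of `π` with respect to `μ`, as a word. -/
def blockWord (n : ℕ) (μ : List ℕ) (π : Equiv.Perm (Fin n)) (i : Fin μ.length) :
    Fin (μ.get i) → ℕ :=
  fun j =>
    if h : (μ.take (i : ℕ)).sum + (j : ℕ) < n then
      (π ⟨(μ.take (i : ℕ)).sum + (j : ℕ), h⟩ : ℕ)
    else 0

/-- `π` is a `μ`-involution: `μ` is a composition of `n` and every block of `π`
standardizes to an involution. -/
def IsMuInv (n : ℕ) (μ : List ℕ) (π : Equiv.Perm (Fin n)) : Prop :=
  μ.sum = n ∧ (∀ x ∈ μ, 0 < x) ∧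
    ∀ i : Fin μ.length,
      ∃ y : Equiv.Perm (Fin (μ.get i)), stdEq (blockWord n μ π i) y ∧ y * y = 1

/-- `w` is a `μ`-atom of `π`: a minimal-length permutation one of whose reduced words
is a reduced `μ`-word for `π`. -/
def IsMuAtom (n : ℕ) (μ : List ℕ) (π w : Equiv.Perm (Fin n)) : Prop :=
  ∃ l : List ℕ, wordProd n l = w ∧ l.length = len n w ∧
    muWord n μ l = π ∧ l.length = lmu n μ π

/-- `ν` refines `μ`: every partial sum of `μ` is a partial sum of `ν`. -/
def Refines (ν μ : List ℕ) : Prop :=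
  ∀ k ≤ μ.length, ∃ k' ≤ ν.length, (ν.take k').sum = (μ.take k).sum

/-- `μ`-Bruhat order via the subword property on reduced `μ`-words. -/
def MuBruhatLE (n : ℕ) (μ : List ℕ) (π τ : Equiv.Perm (Fin n)) : Prop :=
  ∀ l : List ℕ, muWord n μ l = τ → l.length = lmu n μ τ →
    ∃ l' : List ℕ, l'.Sublist l ∧ muWord n μ l' = π ∧ l'.length = lmu n μ π

/-- The longest element `w_0` of `S_n`. -/
def longest (n : ℕ) : Equiv.Perm (Fin n) :=
  ⟨Fin.rev, Fin.rev, Fin.rev_rev, Fin.rev_rev⟩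

/-- The divided difference operator `∂_i f = (f - s_i f)/(x_i - x_{i+1})`. -/
def ddiff (n i : ℕ) (f : MvPolynomial (Fin n) ℚ) : MvPolynomial (Fin n) ℚ :=
  if h : ∃ hi : i + 1 < n, ∃ g : MvPolynomial (Fin n) ℚ,
      f - MvPolynomial.rename (⇑(simpleT n i)) f =
        g * (MvPolynomial.X (⟨i, Nat.lt_of_succ_lt hi⟩ : Fin n) -
          MvPolynomial.X (⟨i + 1, hi⟩ : Fin n))
  then h.choose_spec.choose else 0

/-- A choice of reduced word for `v`. -/
def aRedWord (n : ℕ) (v : Equiv.Perm (Fin n)) : List ℕ :=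
  if h : ∃ l : List ℕ, wordProd n l = v ∧ l.length = len n v then h.choose else []

/-- The Schubert polynomial of `w`: obtained from the staircase monomial
`S_{w_0} = x_1^{n-1} ⋯ x_{n-1}` by applying divided differences along a reduced
word of `w_0 w` (so that `w_0 · s_{a_1} ⋯ s_{a_p} = w`). -/
def schubert (n : ℕ) (w : Equiv.Perm (Fin n)) : MvPolynomial (Fin n) ℚ :=
  (aRedWord n (longest n * w)).foldl (fun f i => ddiff n i f)
    (∏ i : Fin n, MvPolynomial.X i ^ (n - 1 - (i : ℕ)))

/-- The involution Schubert polynomial `S^I_y = ∑_{w ∈ A(y)} S_w`. -/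
def invSchubert (n : ℕ) (y : Equiv.Perm (Fin n)) : MvPolynomial (Fin n) ℚ :=
  ∑ w ∈ Finset.univ.filter (fun w => IsAtomOf n y w), schubert n w

/-- The `μ`-involution Schubert polynomial `S^μ_π = ∑_{w ∈ A_μ(π)} S_w`. -/
def muSchubert (n : ℕ) (μ : List ℕ) (π : Equiv.Perm (Fin n)) : MvPolynomial (Fin n) ℚ :=
  ∑ w ∈ Finset.univ.filter (fun w => IsMuAtom n μ π w), schubert n w

/-- The parabolic (Young) subgroup `S_μ ≤ S_n`, generated by the simple
transpositions not crossing a block boundary of `μ`. -/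
def parabolic (n : ℕ) (μ : List ℕ) : Subgroup (Equiv.Perm (Fin n)) :=
  Subgroup.closure
    {g | ∃ i : ℕ, i + 1 < n ∧ (∀ k ≤ μ.length, (μ.take k).sum ≠ i + 1) ∧ g = simpleT n i}

/-- `z = t^I_{ab}(y)` nontrivially, encoded via atoms: some atom `v` of `y` satisfies
`v ⋖ v t_{ab}` and `v t_{ab}` is an atom of `z`. -/
def tOpI (n : ℕ) (y z : Equiv.Perm (Fin n)) (a b : Fin n) : Prop :=
  ∃ v : Equiv.Perm (Fin n), IsAtomOf n y v ∧
    len n (v * Equiv.swap a b) = len n v + 1 ∧ IsAtomOf n z (v * Equiv.swap a b)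

/-- The local move on one-line notations: a consecutive subsequence `c, a, b`
(with `a < b < c`) of `u` is replaced by `b, c, a` in `v`, all other entries equal. -/
def LocalMove (n : ℕ) (u v : Equiv.Perm (Fin n)) : Prop :=
  ∃ p : ℕ, ∃ hp : p + 2 < n, ∃ a b c : Fin n, a < b ∧ b < c ∧
    u ⟨p, by omega⟩ = c ∧ u ⟨p + 1, by omega⟩ = a ∧ u ⟨p + 2, hp⟩ = b ∧
    v ⟨p, by omega⟩ = b ∧ v ⟨p + 1, by omega⟩ = c ∧ v ⟨p + 2, hp⟩ = a ∧
    ∀ q : Fin n, (q : ℕ) ≠ p → (q : ℕ) ≠ p + 1 → (q : ℕ) ≠ p + 2 → u q = v q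

/-- The values `x, x'` form a (non-fixed-point) block cycle of the word `b`. -/
def Paired (m : ℕ) (b : Fin m → ℕ) (x x' : ℕ) : Prop :=
  ∃ y : Equiv.Perm (Fin m), stdEq b y ∧ ∃ i : Fin m, b i = x ∧ b (y i) = x' ∧ y i ≠ i

/-- `q` is an inverse block atom of the block involution obtained from `b` by
restricting its cycle structure to the value set of `q` (with unmatched values
becoming fixed points). -/
def RestrictedInvBlockAtom (m : ℕ) (b : Fin m → ℕ) (k : ℕ) (q : Fin k → ℕ) : Prop :=
  ∃ bL : Fin k → ℕ, ∃ yL : Equiv.Perm (Fin k),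
    stdEq bL yL ∧ yL * yL = 1 ∧ Set.range bL = Set.range q ∧
    (∀ i j : Fin k, (yL i = j ∧ i ≠ j) ↔ Paired m b (bL i) (bL j)) ∧
    IsInvBlockAtomOf bL q

end

section

open Equiv Finset

variable {n : ℕ} {a b u v : Fin n} {w y z : Perm (Fin n)}

lemma lt_of_adj (hab : (b : ℕ) = a + 1) : a < b := by
  rw [Fin.lt_def]; omega

lemma simpleT_of_adj (hab : (b : ℕ) = a + 1) : simpleT n a = swap a b := by
  rw [simpleT, dif_pos (hab ▸ b.isLt)]
  congr 1
  exact Fin.ext hab.symm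

lemma simpleT_eq_one_or_exists_adj (n i : ℕ) :
    simpleT n i = 1 ∨ ∃ a b : Fin n, (a : ℕ) = i ∧ (b : ℕ) = a + 1 := by
  by_cases hi : i + 1 < n
  · exact Or.inr ⟨⟨i, by omega⟩, ⟨i + 1, hi⟩, rfl, rfl⟩
  · exact Or.inl (dif_neg hi)

lemma swap_lt_swap_iff (hab : (b : ℕ) = a + 1) (h₁ : ¬(u = a ∧ v = b))
    (h₂ : ¬(u = b ∧ v = a)) :
    swap a b u < swap a b v ↔ u < v := by
  simp only [Fin.ext_iff, Fin.lt_def, swap_apply_def] at *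
  split_ifs <;> simp_all <;> omega

lemma swap_lt_swap (hab : (b : ℕ) = a + 1) (huv : u < v) (h : ¬(u = a ∧ v = b)) :
    swap a b u < swap a b v :=
  (swap_lt_swap_iff hab h fun ⟨hu, hv⟩ => (hu ▸ hv ▸ huv).not_gt (lt_of_adj hab)).2 huv

lemma swap_le_swap (hab : (b : ℕ) = a + 1) (huv : u ≤ v) (h : ¬(u = a ∧ v = b)) :
    swap a b u ≤ swap a b v := by
  rcases huv.lt_or_eq with huv | rfl
  · exact (swap_lt_swap hab huv h).le
  · exact le_rfl

lemma swap_apply_le (hab : (b : ℕ) = a + 1) (hub : u ≤ b) (hua : u ≠ a) :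
    swap a b u ≤ a := by
  simp only [Fin.ext_iff, Fin.le_def, swap_apply_def] at *
  split_ifs <;> simp_all <;> omega

lemma apply_apply_of_mul_self (hz : z * z = 1) (x : Fin n) : z (z x) = x := by
  rw [← Perm.mul_apply, hz, Perm.one_apply]

lemma wordProd_append_singleton (l : List ℕ) (i : ℕ) :
    wordProd n (l ++ [i]) = wordProd n l * simpleT n i := by
  simp [wordProd]

def inversions (w : Perm (Fin n)) : Finset (Fin n × Fin n) :=
  univ.filter fun p => p.1 < p.2 ∧ w p.2 < w p.1

def numInv (w : Perm (Fin n)) : ℕ := #(inversions w)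

lemma mem_inversions {p : Fin n × Fin n} : p ∈ inversions w ↔ p.1 < p.2 ∧ w p.2 < w p.1 := by
  simp [inversions]

lemma numInv_one : numInv (1 : Perm (Fin n)) = 0 := by
  rw [numInv, card_eq_zero, inversions, filter_eq_empty_iff]
  exact fun _ _ h => lt_asymm h.1 h.2

lemma numInv_inv (w : Perm (Fin n)) : numInv w⁻¹ = numInv w :=
  card_equiv ((prodComm _ _).trans (prodCongr w⁻¹ w⁻¹)) fun _ => by
    simp [mem_inversions, and_comm]

lemma numInv_mul_swap_of_lt (hab : (b : ℕ) = a + 1) (h : w a < w b) :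
    numInv (w * swap a b) = numInv w + 1 := by
  have hmem : (a, b) ∈ inversions (w * swap a b) := by simp [mem_inversions, lt_of_adj hab, h]
  rw [numInv, ← card_erase_add_one hmem, numInv]
  congr 1
  refine card_equiv (prodCongr (swap a b) (swap a b)) fun ⟨p, q⟩ => ?_
  simp only [mem_erase, mem_inversions, prodCongr_apply, Prod.map, Perm.mul_apply,
    ne_eq, Prod.mk.injEq]
  by_cases h₁ : p = a ∧ q = b
  · obtain ⟨rfl, rfl⟩ := h₁
    simp [(lt_of_adj hab).not_gt]
  by_cases h₂ : p = b ∧ q = a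
  · obtain ⟨rfl, rfl⟩ := h₂
    simp [(lt_of_adj hab).not_gt, h.not_gt]
  rw [swap_lt_swap_iff hab h₁ h₂]
  simp [h₁]

lemma numInv_mul_swap_of_gt (hab : (b : ℕ) = a + 1) (h : w b < w a) :
    numInv (w * swap a b) + 1 = numInv w := by
  have := numInv_mul_swap_of_lt (w := w * swap a b) hab (by simpa using h)
  rw [mul_assoc, swap_mul_self, mul_one] at this
  omega

lemma numInv_swap_mul_of_lt (hab : (b : ℕ) = a + 1) (h : w⁻¹ a < w⁻¹ b) :
    numInv (swap a b * w) = numInv w + 1 := by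
  rw [← numInv_inv, mul_inv_rev, swap_inv, numInv_mul_swap_of_lt hab h, numInv_inv]

lemma numInv_swap_mul_of_gt (hab : (b : ℕ) = a + 1) (h : w⁻¹ b < w⁻¹ a) :
    numInv (swap a b * w) + 1 = numInv w := by
  rw [← numInv_inv, mul_inv_rev, swap_inv, numInv_mul_swap_of_gt hab h, numInv_inv]

lemma numInv_mul_simpleT_le (w : Perm (Fin n)) (i : ℕ) :
    numInv (w * simpleT n i) ≤ numInv w + 1 := by
  rcases simpleT_eq_one_or_exists_adj n i with h | ⟨a, b, rfl, hab⟩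
  · rw [h, mul_one]; omega
  rw [simpleT_of_adj hab]
  rcases lt_or_gt_of_ne (w.injective.ne (lt_of_adj hab).ne) with h | h
  · rw [numInv_mul_swap_of_lt hab h]
  · have := numInv_mul_swap_of_gt hab h; omega

lemma numInv_wordProd_le (l : List ℕ) : numInv (wordProd n l) ≤ l.length := by
  induction l using List.reverseRecOn with
  | nil => simp [wordProd, numInv_one]
  | append_singleton l i ih =>
    have := numInv_mul_simpleT_le (wordProd n l) i
    rw [wordProd_append_singleton, List.length_append, List.length_singleton]
    omega

lemma exists_descent (hw : w ≠ 1) : ∃ a b : Fin n, (b : ℕ) = a + 1 ∧ w b < w a := by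
  by_contra! h
  cases n with
  | zero => exact hw (Subsingleton.elim _ _)
  | succ m =>
    have hmono : StrictMono w := Fin.strictMono_iff_lt_succ.2 fun i =>
      (h i.castSucc i.succ rfl).lt_of_ne (w.injective.ne Fin.castSucc_lt_succ.ne)
    exact hw (Equiv.ext fun x => congrFun hmono.eq_id x)

lemma exists_wordProd_eq_length_eq_numInv (w : Perm (Fin n)) :
    ∃ l : List ℕ, wordProd n l = w ∧ l.length = numInv w := by
  induction hk : numInv w using Nat.strong_induction_on generalizing w with
  | _ k ih =>
  by_cases hw : w = 1
  · subst hw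
    exact ⟨[], rfl, by rw [← hk, numInv_one]; rfl⟩
  obtain ⟨a, b, hab, h⟩ := exists_descent hw
  have hdesc := numInv_mul_swap_of_gt hab h
  obtain ⟨l, hl, hlen⟩ := ih _ (by omega) (w * swap a b) rfl
  refine ⟨l ++ [(a : ℕ)], ?_, ?_⟩
  · rw [wordProd_append_singleton, hl, simpleT_of_adj hab, mul_assoc, swap_mul_self, mul_one]
  · simp only [List.length_append, List.length_singleton]
    omega

lemma len_eq_numInv (w : Perm (Fin n)) : len n w = numInv w := by
  obtain ⟨l, hl, hlen⟩ := exists_wordProd_eq_length_eq_numInv w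
  refine le_antisymm (Nat.sInf_le ⟨l, hlen, hl⟩) (le_csInf ⟨_, l, rfl, hl⟩ ?_)
  rintro _ ⟨l', rfl, rfl⟩
  exact numInv_wordProd_le l'

lemma demStepR_of_adj (hab : (b : ℕ) = a + 1) (w : Perm (Fin n)) :
    demStepR n w a = if w a < w b then w * swap a b else w := by
  rw [demStepR, simpleT_of_adj hab, len_eq_numInv, len_eq_numInv]
  by_cases h : w a < w b
  · rw [if_pos h, if_pos (by rw [numInv_mul_swap_of_lt hab h]; omega)]
  · have h' := (not_lt.1 h).lt_of_ne (w.injective.ne (lt_of_adj hab).ne')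
    have := numInv_mul_swap_of_gt hab h'
    rw [if_neg h, if_neg (by omega)]

lemma demStepL_of_adj (hab : (b : ℕ) = a + 1) (w : Perm (Fin n)) :
    demStepL n a w = if w⁻¹ a < w⁻¹ b then swap a b * w else w := by
  rw [demStepL, simpleT_of_adj hab, len_eq_numInv, len_eq_numInv]
  by_cases h : w⁻¹ a < w⁻¹ b
  · rw [if_pos h, if_pos (by rw [numInv_swap_mul_of_lt hab h]; omega)]
  · have h' := (not_lt.1 h).lt_of_ne (w⁻¹.injective.ne (lt_of_adj hab).ne')
    have := numInv_swap_mul_of_gt hab h'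
    rw [if_neg h, if_neg (by omega)]

lemma demStepR_of_simpleT_eq_one {i : ℕ} (h : simpleT n i = 1) (w : Perm (Fin n)) :
    demStepR n w i = w := by
  simp [demStepR, h]

lemma demStepL_of_simpleT_eq_one {i : ℕ} (h : simpleT n i = 1) (w : Perm (Fin n)) :
    demStepL n i w = w := by
  simp [demStepL, h]

/-- In one-line notation the right step sorts two adjacent positions and the left step two
adjacent values; they interact only when `u` maps those positions onto those values. -/
lemma demStepR_demStepL_comm (i j : ℕ) (u : Perm (Fin n)) :
    demStepR n (demStepL n i u) j = demStepL n i (demStepR n u j) := by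
  rcases simpleT_eq_one_or_exists_adj n i with hi | ⟨a, b, rfl, hab⟩
  · simp only [demStepL_of_simpleT_eq_one hi]
  rcases simpleT_eq_one_or_exists_adj n j with hj | ⟨c, d, rfl, hcd⟩
  · simp only [demStepR_of_simpleT_eq_one hj]
  simp only [demStepR_of_adj hcd, demStepL_of_adj hab]
  have hac := lt_of_adj hab
  have hcd' := lt_of_adj hcd
  by_cases hE : u c = a ∧ u d = b
  · obtain ⟨hc, hd⟩ := hE
    have hca : u⁻¹ a = c := Perm.inv_eq_iff_eq.2 hc.symm
    have hdb : u⁻¹ b = d := Perm.inv_eq_iff_eq.2 hd.symm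
    simp only [hca, hdb, hc, hd, mul_inv_rev, swap_inv, Perm.mul_apply, swap_apply_left,
      swap_apply_right, if_pos hac, if_pos hcd', if_neg hac.not_gt, if_neg hcd'.not_gt]
    rw [mul_swap_eq_swap_mul, hc, hd]
  by_cases hE' : u c = b ∧ u d = a
  · obtain ⟨hc, hd⟩ := hE'
    have hda : u⁻¹ a = d := Perm.inv_eq_iff_eq.2 hd.symm
    have hcb : u⁻¹ b = c := Perm.inv_eq_iff_eq.2 hc.symm
    simp only [hda, hcb, hc, hd, if_neg hac.not_gt, if_neg hcd'.not_gt]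
  have hR : (swap a b * u) c < (swap a b * u) d ↔ u c < u d := swap_lt_swap_iff hab hE hE'
  have hL : (u * swap c d)⁻¹ a < (u * swap c d)⁻¹ b ↔ u⁻¹ a < u⁻¹ b := by
    rw [mul_inv_rev, swap_inv, Perm.mul_apply, Perm.mul_apply]
    refine swap_lt_swap_iff hcd ?_ ?_ <;>
      simp only [Perm.inv_eq_iff_eq] <;> tauto
  by_cases hu : u c < u d <;> by_cases hu' : u⁻¹ a < u⁻¹ b <;>
    simp only [hu, hu', hR, hL, if_true, if_false, mul_assoc]

lemma foldl_demStepR_demStepL (i : ℕ) (l : List ℕ) (u : Perm (Fin n)) :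
    l.foldl (demStepR n) (demStepL n i u) = demStepL n i (l.foldl (demStepR n) u) := by
  induction l generalizing u with
  | nil => rfl
  | cons j l ih => rw [List.foldl_cons, demStepR_demStepL_comm, ih, List.foldl_cons]

lemma demWord_cons (i : ℕ) (l : List ℕ) : demWord n (i :: l) = demStepL n i (demWord n l) := by
  have h : demStepR n 1 i = demStepL n i 1 := by simp only [demStepR, demStepL, one_mul, mul_one]
  rw [demWord, List.foldl_cons, h, foldl_demStepR_demStepL, demWord]

lemma demWord_append_singleton (l : List ℕ) (i : ℕ) :
    demWord n (l ++ [i]) = demStepR n (demWord n l) i := by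
  rw [demWord, List.foldl_append]
  rfl

noncomputable def demConj (n i : ℕ) (z : Perm (Fin n)) : Perm (Fin n) :=
  demStepL n i (demStepR n z i)

lemma demWord_reverse_append_append_singleton (l : List ℕ) (i : ℕ) :
    demWord n ((l ++ [i]).reverse ++ (l ++ [i])) = demConj n i (demWord n (l.reverse ++ l)) := by
  rw [List.reverse_append, List.reverse_singleton, List.singleton_append, List.cons_append,
    ← List.append_assoc, demWord_cons, demWord_append_singleton, demConj]

lemma cycCount_one : cycCount n 1 = n := by
  simp [cycCount]

lemma two_mul_cycCount (hz : z * z = 1) :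
    2 * cycCount n z = n + #(univ.filter fun x => z x = x) := by
  have hsymm : #(univ.filter fun x => x ≤ z x) = #(univ.filter fun x => z x ≤ x) :=
    card_equiv z fun x => by simp [apply_apply_of_mul_self hz]
  have :=
    card_union_add_card_inter (univ.filter fun x => x ≤ z x) (univ.filter fun x => z x ≤ x)
  rw [← filter_or, ← filter_and, filter_true_of_mem fun x _ => le_total x (z x), card_univ,
    Fintype.card_fin, filter_congr fun x _ => le_antisymm_iff.symm.trans eq_comm] at this
  rw [cycCount]
  omega

lemma cycCount_conj (σ : Perm (Fin n)) (hz : z * z = 1) :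
    cycCount n (σ * z * σ⁻¹) = cycCount n z := by
  have hz' : σ * z * σ⁻¹ * (σ * z * σ⁻¹) = 1 := by
    rw [show σ * z * σ⁻¹ * (σ * z * σ⁻¹) = σ * (z * z) * σ⁻¹ by group, hz, mul_one,
      mul_inv_cancel]
  have hfix : #(univ.filter fun x => z x = x) = #(univ.filter fun x => (σ * z * σ⁻¹) x = x) :=
    card_equiv σ fun x => by rw [mem_filter, mem_filter]; simp
  have := two_mul_cycCount hz
  have := two_mul_cycCount hz'
  omega

lemma cycCount_mul_swap (hab : a < b) (ha : z a = a) (hb : z b = b) :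
    cycCount n (z * swap a b) + 1 = cycCount n z := by
  have hmem : b ∈ univ.filter fun x => x ≤ z x := by simp [hb]
  rw [cycCount, cycCount, ← card_erase_add_one hmem]
  congr 2
  ext x
  rw [mem_filter, mem_erase, mem_filter, Perm.mul_apply]
  rcases eq_or_ne x a with rfl | hxa
  · simp [ha, hb, hab.le, hab.ne]
  rcases eq_or_ne x b with rfl | hxb
  · simp [ha, hab]
  · simp [swap_apply_of_ne_of_ne hxa hxb, hxb]

lemma mul_swap_mul_self (hz : z * z = 1) (hcomm : z * swap a b = swap a b * z) :
    z * swap a b * (z * swap a b) = 1 := by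
  rw [mul_assoc, ← mul_assoc (swap a b), ← hcomm, ← mul_assoc, ← mul_assoc, hz, one_mul,
    swap_mul_self]

lemma swap_mul_mul_swap_mul_self (hz : z * z = 1) :
    swap a b * z * swap a b * (swap a b * z * swap a b) = 1 := by
  simp only [mul_assoc, swap_mul_self_mul]
  rw [← mul_assoc z, hz, one_mul, swap_mul_self]

lemma inv_mul_swap_apply_lt (hz : z * z = 1) (hab : (b : ℕ) = a + 1) (h : z a < z b)
    (hfix : ¬(z a = a ∧ z b = b)) : (z * swap a b)⁻¹ a < (z * swap a b)⁻¹ b := by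
  rw [mul_inv_rev, swap_inv, inv_eq_of_mul_eq_one_right hz, Perm.mul_apply, Perm.mul_apply]
  exact swap_lt_swap hab h hfix

lemma numInv_swap_mul_mul_swap (hz : z * z = 1) (hab : (b : ℕ) = a + 1) (h : z a < z b)
    (hfix : ¬(z a = a ∧ z b = b)) : numInv (swap a b * z * swap a b) = numInv z + 2 := by
  rw [mul_assoc, numInv_swap_mul_of_lt hab (inv_mul_swap_apply_lt hz hab h hfix),
    numInv_mul_swap_of_lt hab h]

lemma demConj_of_gt (hz : z * z = 1) (hab : (b : ℕ) = a + 1) (h : z b < z a) :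
    demConj n a z = z := by
  rw [demConj, demStepR_of_adj hab, if_neg h.not_gt, demStepL_of_adj hab,
    inv_eq_of_mul_eq_one_right hz, if_neg h.not_gt]

lemma demConj_of_fixed (hab : (b : ℕ) = a + 1) (ha : z a = a) (hb : z b = b) :
    demConj n a z = z * swap a b := by
  have ha' : z⁻¹ a = a := Perm.inv_eq_iff_eq.2 ha.symm
  have hb' : z⁻¹ b = b := Perm.inv_eq_iff_eq.2 hb.symm
  rw [demConj, demStepR_of_adj hab, ha, hb, if_pos (lt_of_adj hab), demStepL_of_adj hab, if_neg]
  rw [mul_inv_rev, swap_inv, Perm.mul_apply, Perm.mul_apply, ha', hb', swap_apply_left,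
    swap_apply_right]
  exact (lt_of_adj hab).not_gt

lemma demConj_of_lt (hz : z * z = 1) (hab : (b : ℕ) = a + 1) (h : z a < z b)
    (hfix : ¬(z a = a ∧ z b = b)) : demConj n a z = swap a b * z * swap a b := by
  rw [demConj, demStepR_of_adj hab, if_pos h, demStepL_of_adj hab,
    if_pos (inv_mul_swap_apply_lt hz hab h hfix), mul_assoc]

lemma demConj_mul_self_and_numInv_le (hz : z * z = 1) (i : ℕ) :
    demConj n i z * demConj n i z = 1 ∧
      numInv (demConj n i z) + cycCount n z ≤ cycCount n (demConj n i z) + numInv z + 2 := by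
  rcases simpleT_eq_one_or_exists_adj n i with hi | ⟨a, b, rfl, hab⟩
  · rw [demConj, demStepR_of_simpleT_eq_one hi, demStepL_of_simpleT_eq_one hi]
    exact ⟨hz, by omega⟩
  rcases lt_or_gt_of_ne (z.injective.ne (lt_of_adj hab).ne) with h | h
  · by_cases hfix : z a = a ∧ z b = b
    · have := numInv_mul_swap_of_lt hab h
      have := cycCount_mul_swap (lt_of_adj hab) hfix.1 hfix.2
      rw [demConj_of_fixed hab hfix.1 hfix.2]
      exact ⟨mul_swap_mul_self hz (by rw [mul_swap_eq_swap_mul, hfix.1, hfix.2]), by omega⟩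
    · have := numInv_swap_mul_mul_swap hz hab h hfix
      have := swap_inv a b ▸ cycCount_conj (swap a b) hz
      rw [demConj_of_lt hz hab h hfix]
      exact ⟨swap_mul_mul_swap_mul_self hz, by omega⟩
  · rw [demConj_of_gt hz hab h]
    exact ⟨hz, by omega⟩

lemma demWord_reverse_append_mul_self_and_numInv_le (n : ℕ) (l : List ℕ) :
    demWord n (l.reverse ++ l) * demWord n (l.reverse ++ l) = 1 ∧
      numInv (demWord n (l.reverse ++ l)) + n ≤
        cycCount n (demWord n (l.reverse ++ l)) + 2 * l.length := by
  induction l using List.reverseRecOn with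
  | nil => simp [demWord, numInv_one, cycCount_one]
  | append_singleton l i ih =>
    obtain ⟨hinv, hle⟩ := demConj_mul_self_and_numInv_le ih.1 i
    rw [demWord_reverse_append_append_singleton, List.length_append, List.length_singleton]
    exact ⟨hinv, by omega⟩

def cycMax (y : Perm (Fin n)) (x : Fin n) : Fin n := max x (y x)

lemma cycMax_ne_of_lt_apply (hy : y * y = 1) (ha : a < y a) (x : Fin n) : cycMax y x ≠ a := by
  intro h
  have h₁ : x ≤ a := h ▸ le_max_left _ _
  have h₂ : y x ≤ a := h ▸ le_max_right _ _
  rcases max_choice x (y x) with hx | hx <;> rw [cycMax, hx] at h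
  · subst h
    exact h₂.not_gt ha
  · rw [← h, apply_apply_of_mul_self hy] at ha
    rw [← h] at h₁
    exact h₁.not_gt ha

lemma cycMax_swap_apply (hab : a < b) (ha : z a = a) (hb : z b = b) (u : Fin n) :
    cycMax z (swap a b u) = if u = b then a else cycMax (z * swap a b) u := by
  unfold cycMax
  rcases eq_or_ne u a with rfl | hua
  · simp [hb, hab.ne, hab.le]
  rcases eq_or_ne u b with rfl | hub
  · simp [ha]
  · simp [swap_apply_of_ne_of_ne hua hub, hub]

lemma cycMax_swap_apply_lt_of_fixed (hz : z * z = 1) (hab : (b : ℕ) = a + 1) (ha : z a = a)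
    (hb : z b = b)
    (h : cycMax (z * swap a b) u < cycMax (z * swap a b) v) :
    cycMax z (swap a b u) < cycMax z (swap a b v) := by
  have hne := cycMax_ne_of_lt_apply (mul_swap_mul_self hz (by rw [mul_swap_eq_swap_mul, ha, hb]))
    (by simpa [hb] using lt_of_adj hab : a < (z * swap a b) a)
  have hbb : cycMax (z * swap a b) b = b := by simp [cycMax, ha, (lt_of_adj hab).le]
  rw [cycMax_swap_apply (lt_of_adj hab) ha hb, cycMax_swap_apply (lt_of_adj hab) ha hb]
  split_ifs with hu hv hv
  · exact absurd (hu ▸ hv ▸ h) (lt_irrefl _)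
  · rw [hu, hbb] at h
    exact (lt_of_adj hab).trans h
  · rw [hv, hbb] at h
    have := hne u
    simp only [Fin.lt_def, ne_eq, Fin.ext_iff] at h this ⊢
    omega
  · exact h

lemma cycMax_swap_mul_mul_swap (hz : z * z = 1) (hab : (b : ℕ) = a + 1) (hza : z a ≠ b)
    (u : Fin n) : cycMax (swap a b * z * swap a b) (swap a b u) = swap a b (cycMax z u) := by
  simp only [cycMax, Perm.mul_apply, swap_apply_self]
  rcases le_total u (z u) with h | h
  · rw [max_eq_right h, max_eq_right (swap_le_swap hab h ?_)]
    rintro ⟨rfl, hu⟩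
    exact hza hu
  · rw [max_eq_left h, max_eq_left (swap_le_swap hab h ?_)]
    rintro ⟨hu, rfl⟩
    exact hza (by rw [← hu, apply_apply_of_mul_self hz])

lemma cycMax_swap_apply_lt_of_conj (hz : z * z = 1) (hab : (b : ℕ) = a + 1) (ha : z a ≤ a)
    (hb : b < z b) (h : cycMax (swap a b * z * swap a b) u < cycMax (swap a b * z * swap a b) v) :
    cycMax z (swap a b u) < cycMax z (swap a b v) := by
  have hza : z a ≠ b := (ha.trans_lt (lt_of_adj hab)).ne
  have key (t : Fin n) : cycMax z (swap a b t) = swap a b (cycMax (swap a b * z * swap a b) t) := by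
    have := cycMax_swap_mul_mul_swap hz hab hza (swap a b t)
    rw [swap_apply_self] at this
    rw [this, swap_apply_self]
  have hya : a < (swap a b * z * swap a b) a := by
    simpa [swap_apply_of_ne_of_ne ((lt_of_adj hab).trans hb).ne' hb.ne'] using
      (lt_of_adj hab).trans hb
  rw [key, key]
  exact swap_lt_swap hab h fun h' =>
    cycMax_ne_of_lt_apply (swap_mul_mul_swap_mul_self hz) hya u h'.1

/-- The last field is the induction invariant that makes every appended letter an ascent. -/
structure IsAtomWord (y : Perm (Fin n)) (l : List ℕ) : Prop where
  numInv_wordProd : numInv (wordProd n l) = l.length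
  demWord_eq : demWord n (l.reverse ++ l) = y
  numInv_add : numInv y + n = cycCount n y + 2 * l.length
  lt_of_cycMax_lt : ∀ u v, cycMax y u < cycMax y v → wordProd n l u < wordProd n l v

lemma isAtomWord_nil : IsAtomWord (1 : Perm (Fin n)) [] where
  numInv_wordProd := numInv_one
  demWord_eq := rfl
  numInv_add := by simp [numInv_one, cycCount_one]
  lt_of_cycMax_lt u v h := by simpa [cycMax, wordProd] using h

lemma IsAtomWord.append {l : List ℕ} (h : IsAtomWord z l) (hab : (b : ℕ) = a + 1)
    (hasc : cycMax z a < cycMax z b) (hconj : demConj n a z = y)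
    (hnum : numInv y + n = cycCount n y + 2 * (l.length + 1))
    (hsort : ∀ u v, cycMax y u < cycMax y v → cycMax z (swap a b u) < cycMax z (swap a b v)) :
    IsAtomWord y (l ++ [(a : ℕ)]) where
  numInv_wordProd := by
    rw [wordProd_append_singleton, simpleT_of_adj hab,
      numInv_mul_swap_of_lt hab (h.lt_of_cycMax_lt _ _ hasc), h.numInv_wordProd,
      List.length_append, List.length_singleton]
  demWord_eq := by rw [demWord_reverse_append_append_singleton, h.demWord_eq, hconj]
  numInv_add := by rwa [List.length_append, List.length_singleton]
  lt_of_cycMax_lt u v huv := by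
    rw [wordProd_append_singleton, simpleT_of_adj hab, Perm.mul_apply, Perm.mul_apply]
    exact h.lt_of_cycMax_lt _ _ (hsort u v huv)

lemma IsAtomWord.mul_swap {l : List ℕ} (h : IsAtomWord z l) (hz : z * z = 1)
    (hab : (b : ℕ) = a + 1) (ha : z a = a) (hb : z b = b) :
    IsAtomWord (z * swap a b) (l ++ [(a : ℕ)]) := by
  have := numInv_mul_swap_of_lt (w := z) hab (by rw [ha, hb]; exact lt_of_adj hab)
  have := cycCount_mul_swap (lt_of_adj hab) ha hb
  have := h.numInv_add
  exact h.append hab (by simp [cycMax, ha, hb, lt_of_adj hab]) (demConj_of_fixed hab ha hb)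
    (by omega) fun _ _ => cycMax_swap_apply_lt_of_fixed hz hab ha hb

lemma IsAtomWord.swap_mul_mul_swap {l : List ℕ} (h : IsAtomWord z l) (hz : z * z = 1)
    (hab : (b : ℕ) = a + 1) (ha : z a ≤ a) (hb : b < z b) :
    IsAtomWord (swap a b * z * swap a b) (l ++ [(a : ℕ)]) := by
  have hlt : z a < z b := ha.trans_lt ((lt_of_adj hab).trans hb)
  have hfix : ¬(z a = a ∧ z b = b) := fun h => hb.ne' h.2
  have := numInv_swap_mul_mul_swap hz hab hlt hfix
  have := swap_inv a b ▸ cycCount_conj (swap a b) hz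
  have := h.numInv_add
  refine h.append hab ?_ (demConj_of_lt hz hab hlt hfix) (by omega)
    fun _ _ => cycMax_swap_apply_lt_of_conj hz hab ha hb
  rw [cycMax, cycMax, max_eq_left ha, max_eq_right hb.le]
  exact (lt_of_adj hab).trans hb

lemma exists_adj_lt_apply_apply_le (hy : y * y = 1) (h1 : y ≠ 1) :
    ∃ a b : Fin n, (b : ℕ) = a + 1 ∧ a < y a ∧ y b ≤ b := by
  have hne : (univ.filter fun x => x < y x).Nonempty := by
    obtain ⟨x, hx⟩ : ∃ x, y x ≠ x := not_forall.1 fun h => h1 (Equiv.ext h)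
    rcases hx.lt_or_gt with h | h
    · exact ⟨y x, by simpa [apply_apply_of_mul_self hy] using h⟩
    · exact ⟨x, by simpa using h⟩
  obtain ⟨a, ha, hmax⟩ := exists_max_image _ id hne
  rw [mem_filter] at ha
  have hb : (a : ℕ) + 1 < n := lt_of_le_of_lt (Fin.lt_def.1 ha.2) (y a).isLt
  refine ⟨a, ⟨a + 1, hb⟩, rfl, ha.2, not_lt.1 fun h => ?_⟩
  simpa [Fin.le_def] using hmax _ (mem_filter.2 ⟨mem_univ _, h⟩)

lemma exists_isAtomWord (hy : y * y = 1) : ∃ l, IsAtomWord y l := by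
  induction hk : numInv y using Nat.strong_induction_on generalizing y with
  | _ k ih =>
  by_cases h1 : y = 1
  · subst h1
    exact ⟨[], isAtomWord_nil⟩
  obtain ⟨a, b, hab, ha, hb⟩ := exists_adj_lt_apply_apply_le hy h1
  have hba : b ≤ y a := by simp only [Fin.le_def, Fin.lt_def] at ha ⊢; omega
  rcases hba.eq_or_lt with hba | hba
  · have hyb : y b = a := by rw [hba, apply_apply_of_mul_self hy]
    set z := y * swap a b
    have hz : z * z = 1 :=
      mul_swap_mul_self hy (by rw [mul_swap_eq_swap_mul, ← hba, hyb, swap_comm])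
    have hza : z a = a := by simp [z, hyb]
    have hzb : z b = b := by simp [z, ← hba]
    have hyz : z * swap a b = y := by simp [z, mul_assoc]
    have := numInv_mul_swap_of_lt (w := z) hab (by rw [hza, hzb]; exact lt_of_adj hab)
    obtain ⟨l, hl⟩ := ih (numInv z) (by rw [hyz] at this; omega) hz rfl
    exact ⟨_, hyz ▸ hl.mul_swap hz hab hza hzb⟩
  · have hyba : y b ≠ a := fun h => hba.ne (by rw [← h, apply_apply_of_mul_self hy])
    set z := swap a b * y * swap a b
    have hz : z * z = 1 := swap_mul_mul_swap_mul_self hy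
    have hza : z a ≤ a := by
      change swap a b (y (swap a b a)) ≤ a
      rw [swap_apply_left]
      exact swap_apply_le hab hb hyba
    have hzb : b < z b := by simpa [z, swap_apply_of_ne_of_ne ha.ne' hba.ne'] using hba
    have hyz : swap a b * z * swap a b = y := by simp [z, mul_assoc]
    have hlt : z a < z b := hza.trans_lt ((lt_of_adj hab).trans hzb)
    have := numInv_swap_mul_mul_swap hz hab hlt fun h => hzb.ne' h.2
    obtain ⟨l, hl⟩ := ih (numInv z) (by rw [hyz] at this; omega) hz rfl
    exact ⟨_, hyz ▸ hl.swap_mul_mul_swap hz hab hza hzb⟩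

end

/-- For an involution `y` and any `w` with `w⁻¹ ∘ w = y` (Demazure product),
`ℓ(w) ≥ ℓ̂(y)`, i.e. `ℓ(y) + n ≤ |Cyc(y)| + 2ℓ(w)`; moreover equality is attained,
so the atoms of `y` are exactly the minimal-length such `w`. -/
theorem atoms_are_minimal (n : ℕ) (y : Equiv.Perm (Fin n)) (hy : y * y = 1) :
    (∀ w : Equiv.Perm (Fin n), DemSelf n w y →
      len n y + n ≤ cycCount n y + 2 * len n w) ∧
    ∃ w : Equiv.Perm (Fin n), DemSelf n w y ∧
      len n y + n = cycCount n y + 2 * len n w := by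
  refine ⟨fun w ⟨l, _, hlen, hly⟩ => ?_, ?_⟩
  · have := (demWord_reverse_append_mul_self_and_numInv_le n l).2
    rwa [hly, ← len_eq_numInv, hlen] at this
  · obtain ⟨l, hl⟩ := exists_isAtomWord hy
    have hlen : l.length = len n (wordProd n l) := by rw [len_eq_numInv, hl.numInv_wordProd]
    refine ⟨wordProd n l, ⟨l, rfl, hlen, hl.demWord_eq⟩, ?_⟩
    rw [len_eq_numInv, ← hlen, hl.numInv_add]
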